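/- Define the relation ∼ on V = χ_ξ^{-1}(0) \ {0} by x ∼ y iff χ_ξ(x−y) = 0, where χ_ξ(x) = ∫ min{‖P_E x‖, ‖P_{E⊥} x‖} dξ(E). Then ∼ is an equivalence relation on V, and if x, y ∈ V with x ≁ y, then x and y are orthogonal in ℝⁿ. -/

import Mathlib

open MeasureTheory
open scoped ENNReal RealInnerProductSpace

/-- The orthogonal projection onto `E`, as a map `ℝⁿ → ℝⁿ`. -/
noncomputable def projCLM {n : ℕ} (E : Submodule ℝ (EuclideanSpace ℝ (Fin n))) :
    EuclideanSpace ℝ (Fin n) →L[ℝ] EuclideanSpace ℝ (Fin n) :=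
  E.subtypeL.comp (E.orthogonalProjection)

/-- The space of linear subspaces of `ℝⁿ`, topologized so that `E ↦ P_E` is continuous. -/
noncomputable instance subspaceTop (n : ℕ) :
    TopologicalSpace (Submodule ℝ (EuclideanSpace ℝ (Fin n))) :=
  TopologicalSpace.induced projCLM inferInstance

/-- The Borel σ-algebra on the space of linear subspaces of `ℝⁿ`. -/
noncomputable instance subspaceMeas (n : ℕ) :
    MeasurableSpace (Submodule ℝ (EuclideanSpace ℝ (Fin n))) := borel _

/-- `χ_ξ(x) = ∫ min{‖P_E x‖, ‖P_{E⊥} x‖} dξ(E)`. -/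
noncomputable def chiXi {n : ℕ}
    (ξ : Measure (Submodule ℝ (EuclideanSpace ℝ (Fin n))))
    (x : EuclideanSpace ℝ (Fin n)) : ℝ :=
  ∫ E, min ‖projCLM E x‖ ‖projCLM Eᗮ x‖ ∂ξ

/-! Since the integrand is continuous in `E` and bounded by `‖x‖`, `χ_ξ(x) = 0` exactly when
`x ∈ E ∪ Eᗮ` for `ξ`-a.e. `E`, so each clause only has to be checked for a single subspace `E`.
There, a nonzero `y` lying in `E` (or in `Eᗮ`) pulls every `z ∈ E ∪ Eᗮ` with `y - z ∈ E ∪ Eᗮ`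
to its own side, because `E ⊓ Eᗮ = ⊥`; this gives transitivity. Vectors on opposite sides
are orthogonal, so vectors with nonzero inner product lie on a common side. -/

theorem min_norm_eq_zero_iff {F : Type*} [NormedAddCommGroup F] {a b : F} :
    min ‖a‖ ‖b‖ = 0 ↔ a = 0 ∨ b = 0 := by
  refine ⟨fun h => ?_, by rintro (rfl | rfl) <;> simp⟩
  rcases min_choice ‖a‖ ‖b‖ with h' | h' <;> rw [h', norm_eq_zero] at h
  exacts [.inl h, .inr h]

namespace Submodule

variable {R M : Type*} [Ring R] [AddCommGroup M] [Module R M] {A B : Submodule R M} {x y z : M}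

theorem sub_mem_or_sub_mem_comm (h : x - y ∈ A ∨ x - y ∈ B) : y - x ∈ A ∨ y - x ∈ B := by
  rw [← neg_sub]
  exact h.imp A.neg_mem B.neg_mem

theorem mem_of_sub_mem_or_of_disjoint (hAB : Disjoint A B) (hy : y ∈ A) (hy0 : y ≠ 0)
    (hz : z ∈ A ∨ z ∈ B) (hyz : y - z ∈ A ∨ y - z ∈ B) : z ∈ A := by
  rcases hz with hz | hz
  · exact hz
  rcases hyz with hyz | hyz
  · simpa using A.sub_mem hy hyz
  · exact absurd (disjoint_def.mp hAB y hy (by simpa using B.add_mem hyz hz)) hy0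

theorem sub_mem_or_trans (hAB : Disjoint A B) (hx : x ∈ A ∨ x ∈ B) (hy : y ∈ A ∨ y ∈ B)
    (hy0 : y ≠ 0) (hz : z ∈ A ∨ z ∈ B) (hxy : x - y ∈ A ∨ x - y ∈ B)
    (hyz : y - z ∈ A ∨ y - z ∈ B) : x - z ∈ A ∨ x - z ∈ B := by
  have hyx := sub_mem_or_sub_mem_comm hxy
  rcases hy with hy | hy
  · exact .inl <| A.sub_mem (mem_of_sub_mem_or_of_disjoint hAB hy hy0 hx hyx)
      (mem_of_sub_mem_or_of_disjoint hAB hy hy0 hz hyz)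
  · exact .inr <| B.sub_mem (mem_of_sub_mem_or_of_disjoint hAB.symm hy hy0 hx.symm hyx.symm)
      (mem_of_sub_mem_or_of_disjoint hAB.symm hy hy0 hz.symm hyz.symm)

variable {𝕜 E : Type*} [RCLike 𝕜] [NormedAddCommGroup E] [InnerProductSpace 𝕜 E]
  {K : Submodule 𝕜 E} {u v : E}

theorem sub_mem_or_of_inner_ne_zero (hu : u ∈ K ∨ u ∈ Kᗮ) (hv : v ∈ K ∨ v ∈ Kᗮ)
    (huv : inner 𝕜 u v ≠ 0) : u - v ∈ K ∨ u - v ∈ Kᗮ := by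
  rcases hu with hu | hu <;> rcases hv with hv | hv
  · exact .inl (K.sub_mem hu hv)
  · exact absurd (K.inner_right_of_mem_orthogonal hu hv) huv
  · exact absurd (K.inner_left_of_mem_orthogonal hv hu) huv
  · exact .inr (Kᗮ.sub_mem hu hv)

end Submodule

section chiXi

variable {n : ℕ}

instance subspaceBorel : BorelSpace (Submodule ℝ (EuclideanSpace ℝ (Fin n))) :=
  ⟨rfl⟩

theorem projCLM_eq_starProjection (E : Submodule ℝ (EuclideanSpace ℝ (Fin n))) :
    projCLM E = E.starProjection :=
  rfl

theorem continuous_projCLM_apply (x : EuclideanSpace ℝ (Fin n)) :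
    Continuous fun E : Submodule ℝ (EuclideanSpace ℝ (Fin n)) => projCLM E x :=
  continuous_induced_dom.clm_apply continuous_const

theorem min_norm_projCLM_eq_zero_iff (E : Submodule ℝ (EuclideanSpace ℝ (Fin n)))
    (x : EuclideanSpace ℝ (Fin n)) :
    min ‖projCLM E x‖ ‖projCLM Eᗮ x‖ = 0 ↔ x ∈ E ∨ x ∈ Eᗮ := by
  rw [min_norm_eq_zero_iff, projCLM_eq_starProjection, projCLM_eq_starProjection,
    Submodule.starProjection_apply_eq_zero_iff, Submodule.starProjection_apply_eq_zero_iff,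
    Submodule.orthogonal_orthogonal, or_comm]

theorem integrable_min_norm_projCLM (ξ : Measure (Submodule ℝ (EuclideanSpace ℝ (Fin n))))
    [IsFiniteMeasure ξ] (x : EuclideanSpace ℝ (Fin n)) :
    Integrable (fun E => min ‖projCLM E x‖ ‖projCLM Eᗮ x‖) ξ := by
  have hcont : Continuous fun E : Submodule ℝ (EuclideanSpace ℝ (Fin n)) =>
      min ‖projCLM E x‖ ‖projCLM Eᗮ x‖ := by
    simp_rw [projCLM_eq_starProjection, Submodule.starProjection_orthogonal,
      ← projCLM_eq_starProjection]
    exact (continuous_projCLM_apply x).norm.min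
      ((continuous_const.sub (continuous_projCLM_apply x)).norm)
  refine Integrable.of_bound (C := ‖x‖) hcont.aestronglyMeasurable (ae_of_all _ fun E => ?_)
  rw [Real.norm_of_nonneg (le_min (norm_nonneg _) (norm_nonneg _))]
  exact (min_le_left _ _).trans (E.norm_starProjection_apply_le x)

theorem chiXi_eq_zero_iff (ξ : Measure (Submodule ℝ (EuclideanSpace ℝ (Fin n))))
    [IsFiniteMeasure ξ] (x : EuclideanSpace ℝ (Fin n)) :
    chiXi ξ x = 0 ↔ ∀ᵐ (E : Submodule ℝ (EuclideanSpace ℝ (Fin n))) ∂ξ, x ∈ E ∨ x ∈ Eᗮ := by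
  rw [chiXi, integral_eq_zero_iff_of_nonneg (fun E => le_min (norm_nonneg _) (norm_nonneg _))
    (integrable_min_norm_projCLM ξ x)]
  exact Filter.eventually_congr (ae_of_all _ fun E => min_norm_projCLM_eq_zero_iff E x)

end chiXi

/-- The relation `x ∼ y ↔ χ_ξ(x−y) = 0` is an equivalence relation on
`V = χ_ξ⁻¹(0) \ {0}`, and non-equivalent elements of `V` are orthogonal. -/
theorem chiXi_rel_equivalence_and_orthogonal {n : ℕ}
    (ξ : Measure (Submodule ℝ (EuclideanSpace ℝ (Fin n)))) [IsProbabilityMeasure ξ] :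
    let V : Set (EuclideanSpace ℝ (Fin n)) := {x | chiXi ξ x = 0} \ {0}
    (∀ x ∈ V, chiXi ξ (x - x) = 0) ∧
    (∀ x ∈ V, ∀ y ∈ V, chiXi ξ (x - y) = 0 → chiXi ξ (y - x) = 0) ∧
    (∀ x ∈ V, ∀ y ∈ V, ∀ z ∈ V,
      chiXi ξ (x - y) = 0 → chiXi ξ (y - z) = 0 → chiXi ξ (x - z) = 0) ∧
    (∀ x ∈ V, ∀ y ∈ V, chiXi ξ (x - y) ≠ 0 → ⟪x, y⟫ = 0) := by
  intro V
  simp only [V, Set.mem_sdiff, Set.mem_ofPred_eq, Set.mem_singleton_iff, ne_eq,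
    chiXi_eq_zero_iff ξ]
  refine ⟨fun x _ => by simp, fun x _ y _ hxy => ?_, fun x hx y hy z hz hxy hyz => ?_,
    fun x hx y hy => not_imp_comm.mp fun hxy => ?_⟩
  · filter_upwards [hxy] with E hE using Submodule.sub_mem_or_sub_mem_comm hE
  · filter_upwards [hx.1, hy.1, hz.1, hxy, hyz] with E hxE hyE hzE hxyE hyzE using
      Submodule.sub_mem_or_trans E.orthogonal_disjoint hxE hyE hy.2 hzE hxyE hyzE
  · filter_upwards [hx.1, hy.1] with E hxE hyE using
      Submodule.sub_mem_or_of_inner_ne_zero hxE hyE hxy
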